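/- If the estimated DoA unit vectors satisfy ‖u_k − û_k‖ ≤ ε for true unit directions û_k, all rays pass through the true source s₀ (i.e., (I − û_k û_kᵀ)(s₀ − p_k) = 0), the true matrix Â = Σ_k w_k (I − û_k û_kᵀ) has smallest eigenvalue λ_min > 0, and ‖s₀ − p_k‖ ≤ R, Σ_k w_k = W, then for sufficiently small ε the perturbed estimate s* = A⁻¹ Σ_k w_k P_k p_k satisfies ‖s* − s₀‖ ≤ C ε for a constant C depending only on λ_min, W, R. -/

import Mathlib

/-!
The true matrix `Â = ∑ wₖ (1 - ûₖ ûₖᵀ)` satisfies `xᵀ Â x ≥ λmin ‖x‖²`. For unit vectors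
`‖(P_u - P_û) x‖ ≤ 2 ‖u - û‖ ‖x‖`, so `A` is within `2εW` of `Â` and, once `ε ≤ λmin / (4W)`,
still satisfies `xᵀ A x ≥ (λmin / 2) ‖x‖²`; hence `A` is invertible with `‖A⁻¹‖ ≤ 2 / λmin`.
Since every true ray passes through `s₀`, the residual
`A s₀ - b = ∑ wₖ (P_{uₖ} - P_{ûₖ}) (s₀ - pₖ)` has norm at most `2εWR`, and
`s* - s₀ = -A⁻¹ (A s₀ - b)` gives `‖s* - s₀‖ ≤ (4WR / λmin) ε`.
-/

open Matrix WithLp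

namespace Matrix

variable {n ι : Type*} [Fintype n]

lemma norm_toLp_sq (x : n → ℝ) : ‖toLp 2 x‖ ^ 2 = ∑ i, x i ^ 2 :=
  EuclideanSpace.real_norm_sq_eq _

lemma norm_toLp_le_of_sum_sq_le {x : n → ℝ} {r : ℝ} (hr : 0 ≤ r)
    (h : ∑ i, x i ^ 2 ≤ r ^ 2) : ‖toLp 2 x‖ ≤ r :=
  (pow_le_pow_iff_left₀ (norm_nonneg _) hr two_ne_zero).mp (norm_toLp_sq x ▸ h)

lemma abs_dotProduct_le_norm_mul_norm (x y : n → ℝ) :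
    |x ⬝ᵥ y| ≤ ‖toLp 2 x‖ * ‖toLp 2 y‖ := by
  simpa [EuclideanSpace.inner_toLp_toLp, dotProduct_comm] using
    abs_real_inner_le_norm (toLp 2 x) (toLp 2 y)

def IsCoerciveWith (A : Matrix n n ℝ) (c : ℝ) : Prop :=
  ∀ x : n → ℝ, c * ‖toLp 2 x‖ ^ 2 ≤ x ⬝ᵥ A *ᵥ x

namespace IsCoerciveWith

variable {A B : Matrix n n ℝ} {c c' δ : ℝ}

lemma mono (hA : A.IsCoerciveWith c) (h : c' ≤ c) : A.IsCoerciveWith c' := fun x =>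
  (mul_le_mul_of_nonneg_right h (sq_nonneg _)).trans (hA x)

lemma of_norm_mulVec_sub_le (hB : B.IsCoerciveWith c)
    (hAB : ∀ x, ‖toLp 2 (A *ᵥ x - B *ᵥ x)‖ ≤ δ * ‖toLp 2 x‖) :
    A.IsCoerciveWith (c - δ) := by
  intro x
  have hsplit : x ⬝ᵥ A *ᵥ x = x ⬝ᵥ B *ᵥ x + x ⬝ᵥ (A *ᵥ x - B *ᵥ x) := by
    rw [dotProduct_sub]; ring
  have herr : |x ⬝ᵥ (A *ᵥ x - B *ᵥ x)| ≤ δ * ‖toLp 2 x‖ ^ 2 :=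
    calc _ ≤ ‖toLp 2 x‖ * ‖toLp 2 (A *ᵥ x - B *ᵥ x)‖ := abs_dotProduct_le_norm_mul_norm _ _
      _ ≤ ‖toLp 2 x‖ * (δ * ‖toLp 2 x‖) := by gcongr; exact hAB x
      _ = δ * ‖toLp 2 x‖ ^ 2 := by ring
  linarith [hB x, neg_abs_le (x ⬝ᵥ (A *ᵥ x - B *ᵥ x))]

lemma mul_norm_le_norm_mulVec (hA : A.IsCoerciveWith c) (x : n → ℝ) :
    c * ‖toLp 2 x‖ ≤ ‖toLp 2 (A *ᵥ x)‖ := by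
  rcases (norm_nonneg (toLp 2 x)).eq_or_lt with hx | hx
  · rw [← hx, mul_zero]; exact norm_nonneg _
  refine le_of_mul_le_mul_right ?_ hx
  calc c * ‖toLp 2 x‖ * ‖toLp 2 x‖ = c * ‖toLp 2 x‖ ^ 2 := by ring
    _ ≤ x ⬝ᵥ A *ᵥ x := hA x
    _ ≤ |x ⬝ᵥ A *ᵥ x| := le_abs_self _
    _ ≤ ‖toLp 2 x‖ * ‖toLp 2 (A *ᵥ x)‖ := abs_dotProduct_le_norm_mul_norm _ _
    _ = _ := mul_comm _ _

variable [DecidableEq n]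

lemma isUnit (hA : A.IsCoerciveWith c) (hc : 0 < c) : IsUnit A := by
  refine mulVec_injective_iff_isUnit.mp fun x y hxy => ?_
  have h := hA.mul_norm_le_norm_mulVec (x - y)
  rw [mulVec_sub, hxy, sub_self, toLp_zero, norm_zero] at h
  have : ‖toLp 2 (x - y)‖ = 0 := le_antisymm (nonpos_of_mul_nonpos_right h hc) (norm_nonneg _)
  rwa [norm_eq_zero, toLp_eq_zero, sub_eq_zero] at this

lemma norm_inv_mulVec_le (hA : A.IsCoerciveWith c) (hc : 0 < c) (v : n → ℝ) :
    ‖toLp 2 (A⁻¹ *ᵥ v)‖ ≤ ‖toLp 2 v‖ / c := by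
  have h := hA.mul_norm_le_norm_mulVec (A⁻¹ *ᵥ v)
  rw [mulVec_mulVec, mul_nonsing_inv _ ((isUnit_iff_isUnit_det A).mp (hA.isUnit hc)),
    one_mulVec] at h
  rwa [le_div_iff₀ hc, mul_comm]

lemma norm_inv_mulVec_sub_le (hA : A.IsCoerciveWith c) (hc : 0 < c) (b s : n → ℝ) :
    ‖toLp 2 (A⁻¹ *ᵥ b - s)‖ ≤ ‖toLp 2 (A *ᵥ s - b)‖ / c := by
  have key : A⁻¹ *ᵥ b - s = -(A⁻¹ *ᵥ (A *ᵥ s - b)) := by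
    rw [mulVec_sub, mulVec_mulVec,
      nonsing_inv_mul _ ((isUnit_iff_isUnit_det A).mp (hA.isUnit hc)), one_mulVec, neg_sub]
  rw [key, toLp_neg, norm_neg]
  exact hA.norm_inv_mulVec_le hc _

end IsCoerciveWith

lemma sum_smul_mulVec [Fintype ι] (w : ι → ℝ) (M : ι → Matrix n n ℝ) (x : n → ℝ) :
    (∑ k, w k • M k) *ᵥ x = ∑ k, w k • M k *ᵥ x := by
  simp only [sum_mulVec, smul_mulVec]

variable [DecidableEq n]

lemma one_sub_vecMulVec_mulVec (u x : n → ℝ) :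
    (1 - vecMulVec u u) *ᵥ x = x - (u ⬝ᵥ x) • u := by
  rw [sub_mulVec, one_mulVec, vecMulVec_mulVec, op_smul_eq_smul]

lemma norm_one_sub_vecMulVec_mulVec_sub_le {u v : n → ℝ} (hu : ‖toLp 2 u‖ ≤ 1)
    (hv : ‖toLp 2 v‖ ≤ 1) (x : n → ℝ) :
    ‖toLp 2 ((1 - vecMulVec u u) *ᵥ x - (1 - vecMulVec v v) *ᵥ x)‖ ≤
      2 * ‖toLp 2 (u - v)‖ * ‖toLp 2 x‖ := by
  have key : (1 - vecMulVec u u) *ᵥ x - (1 - vecMulVec v v) *ᵥ x =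
      -((v ⬝ᵥ x) • (u - v) + ((u - v) ⬝ᵥ x) • u) := by
    simp only [one_sub_vecMulVec_mulVec, sub_dotProduct, smul_sub, sub_smul]
    abel
  have hvx : |v ⬝ᵥ x| ≤ ‖toLp 2 x‖ :=
    (abs_dotProduct_le_norm_mul_norm v x).trans (mul_le_of_le_one_left (norm_nonneg _) hv)
  have huvx := abs_dotProduct_le_norm_mul_norm (u - v) x
  rw [key, toLp_neg, norm_neg, toLp_add, toLp_smul, toLp_smul]
  calc _ ≤ ‖(v ⬝ᵥ x) • toLp 2 (u - v)‖ + ‖((u - v) ⬝ᵥ x) • toLp 2 u‖ := norm_add_le _ _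
    _ = |v ⬝ᵥ x| * ‖toLp 2 (u - v)‖ + |(u - v) ⬝ᵥ x| * ‖toLp 2 u‖ := by
      rw [norm_smul, norm_smul, Real.norm_eq_abs, Real.norm_eq_abs]
    _ ≤ ‖toLp 2 x‖ * ‖toLp 2 (u - v)‖ + ‖toLp 2 (u - v)‖ * ‖toLp 2 x‖ * 1 := by
      gcongr
    _ = _ := by ring

section WeightedProjections

variable [Fintype ι] {w : ι → ℝ} {u v : ι → n → ℝ} {ε : ℝ}

lemma norm_sum_smul_one_sub_vecMulVec_mulVec_sub_le (hw : ∀ k, 0 ≤ w k)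
    (hu : ∀ k, ‖toLp 2 (u k)‖ ≤ 1) (hv : ∀ k, ‖toLp 2 (v k)‖ ≤ 1)
    (huv : ∀ k, ‖toLp 2 (u k - v k)‖ ≤ ε) {y : ι → n → ℝ} {r : ℝ}
    (hy : ∀ k, ‖toLp 2 (y k)‖ ≤ r) :
    ‖toLp 2 (∑ k, w k •
        ((1 - vecMulVec (u k) (u k)) *ᵥ y k - (1 - vecMulVec (v k) (v k)) *ᵥ y k))‖ ≤
      2 * ε * r * ∑ k, w k := by
  rw [toLp_sum, Finset.mul_sum]
  refine (norm_sum_le _ _).trans (Finset.sum_le_sum fun k _ => ?_)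
  rw [toLp_smul, norm_smul, Real.norm_of_nonneg (hw k), mul_comm (2 * ε * r)]
  refine mul_le_mul_of_nonneg_left ?_ (hw k)
  calc _ ≤ 2 * ‖toLp 2 (u k - v k)‖ * ‖toLp 2 (y k)‖ :=
        norm_one_sub_vecMulVec_mulVec_sub_le (hu k) (hv k) (y k)
    _ ≤ 2 * ε * r := by
      have hε : 0 ≤ ε := (norm_nonneg _).trans (huv k)
      gcongr
      exacts [huv k, hy k]

lemma isCoerciveWith_sum_smul_one_sub_vecMulVec (hw : ∀ k, 0 ≤ w k)
    (hu : ∀ k, ‖toLp 2 (u k)‖ ≤ 1) (hv : ∀ k, ‖toLp 2 (v k)‖ ≤ 1)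
    (huv : ∀ k, ‖toLp 2 (u k - v k)‖ ≤ ε) {c : ℝ}
    (hc : (∑ k, w k • (1 - vecMulVec (v k) (v k))).IsCoerciveWith c) :
    (∑ k, w k • (1 - vecMulVec (u k) (u k))).IsCoerciveWith (c - 2 * ε * ∑ k, w k) := by
  refine hc.of_norm_mulVec_sub_le fun x => ?_
  rw [sum_smul_mulVec, sum_smul_mulVec, ← Finset.sum_sub_distrib]
  simp only [← smul_sub]
  have h := norm_sum_smul_one_sub_vecMulVec_mulVec_sub_le hw hu hv huv (y := fun _ => x)
    fun _ => le_rfl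
  linarith

lemma norm_sum_smul_one_sub_vecMulVec_residual_le (hw : ∀ k, 0 ≤ w k)
    (hu : ∀ k, ‖toLp 2 (u k)‖ ≤ 1) (hv : ∀ k, ‖toLp 2 (v k)‖ ≤ 1)
    (huv : ∀ k, ‖toLp 2 (u k - v k)‖ ≤ ε) {p : ι → n → ℝ} {s : n → ℝ} {R : ℝ}
    (hray : ∀ k, (1 - vecMulVec (v k) (v k)) *ᵥ (s - p k) = 0)
    (hR : ∀ k, ‖toLp 2 (s - p k)‖ ≤ R) :
    ‖toLp 2 ((∑ k, w k • (1 - vecMulVec (u k) (u k))) *ᵥ s -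
        ∑ k, w k • (1 - vecMulVec (u k) (u k)) *ᵥ p k)‖ ≤ 2 * ε * R * ∑ k, w k := by
  convert norm_sum_smul_one_sub_vecMulVec_mulVec_sub_le hw hu hv huv hR using 3
  simp only [hray, sub_zero, sum_smul_mulVec, ← Finset.sum_sub_distrib, ← smul_sub, mulVec_sub]

end WeightedProjections

end Matrix

/-- Stability of continuous localization: if the noisy unit DoA vectors `u_k`
are within `ε` of true unit directions `û_k` whose rays all pass through the
true source `s₀`, the true matrix `Â` has smallest eigenvalue `≥ λmin > 0`,
`Σ w_k = W`, and `‖s₀ - p_k‖ ≤ R`, then for sufficiently small `ε` the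
perturbed estimate satisfies `‖s* - s₀‖ ≤ C ε`, with `C` depending only on
`λmin, W, R`. -/
theorem stmt18 (lammin W R : ℝ) (hlam : 0 < lammin) (hW : 0 < W) (hR : 0 < R) :
    ∃ C > (0 : ℝ), ∃ ε₀ > (0 : ℝ), ∀ (ε : ℝ), 0 < ε → ε ≤ ε₀ →
      ∀ (K : ℕ) (u uh : Fin K → Fin 3 → ℝ) (w : Fin K → ℝ)
        (p : Fin K → Fin 3 → ℝ) (s₀ : Fin 3 → ℝ),
      (∀ k, ∑ i, u k i ^ 2 = 1) →
      (∀ k, ∑ i, uh k i ^ 2 = 1) →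
      (∀ k, 0 < w k) →
      (∑ k, w k) = W →
      (∀ k, ∑ i, (u k i - uh k i) ^ 2 ≤ ε ^ 2) →
      (∀ k, ((1 : Matrix (Fin 3) (Fin 3) ℝ) - Matrix.vecMulVec (uh k) (uh k)).mulVec
          (s₀ - p k) = 0) →
      (∀ x : Fin 3 → ℝ, lammin * ∑ i, x i ^ 2 ≤
          x ⬝ᵥ (∑ k, w k • ((1 : Matrix (Fin 3) (Fin 3) ℝ) -
            Matrix.vecMulVec (uh k) (uh k))).mulVec x) →
      (∀ k, ∑ i, (s₀ i - p k i) ^ 2 ≤ R ^ 2) →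
      ∀ (A : Matrix (Fin 3) (Fin 3) ℝ),
        A = ∑ k, w k • ((1 : Matrix (Fin 3) (Fin 3) ℝ) - Matrix.vecMulVec (u k) (u k)) →
        ∀ (sstar : Fin 3 → ℝ),
          sstar = A⁻¹.mulVec (∑ k, w k •
            (((1 : Matrix (Fin 3) (Fin 3) ℝ) - Matrix.vecMulVec (u k) (u k)).mulVec (p k))) →
          IsUnit A ∧ ∑ i, (sstar i - s₀ i) ^ 2 ≤ (C * ε) ^ 2 := by
  refine ⟨4 * W * R / lammin, by positivity, lammin / (4 * W), by positivity, ?_⟩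
  intro ε hε hεle K u uh w p s₀ hu huh hw hWsum hclose hray hpd hRk A hA sstar hs
  subst hA hs
  have hw0 : ∀ k, 0 ≤ w k := fun k => (hw k).le
  have hu1 : ∀ k, ‖toLp 2 (u k)‖ ≤ 1 := fun k =>
    norm_toLp_le_of_sum_sq_le zero_le_one (by rw [hu k, one_pow])
  have huh1 : ∀ k, ‖toLp 2 (uh k)‖ ≤ 1 := fun k =>
    norm_toLp_le_of_sum_sq_le zero_le_one (by rw [huh k, one_pow])
  have huv : ∀ k, ‖toLp 2 (u k - uh k)‖ ≤ ε := fun k =>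
    norm_toLp_le_of_sum_sq_le hε.le (hclose k)
  have hsp : ∀ k, ‖toLp 2 (s₀ - p k)‖ ≤ R := fun k => norm_toLp_le_of_sum_sq_le hR.le (hRk k)
  have hcoer : (∑ k, w k • (1 - vecMulVec (u k) (u k))).IsCoerciveWith (lammin / 2) := by
    have htrue : (∑ k, w k • (1 - vecMulVec (uh k) (uh k))).IsCoerciveWith lammin := fun x => by
      rw [norm_toLp_sq]; exact hpd x
    refine (isCoerciveWith_sum_smul_one_sub_vecMulVec hw0 hu1 huh1 huv htrue).mono ?_
    rw [hWsum]
    have := (le_div_iff₀ (by positivity)).mp hεle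
    linarith
  have hres := norm_sum_smul_one_sub_vecMulVec_residual_le hw0 hu1 huh1 huv hray hsp
  have herr := (hcoer.norm_inv_mulVec_sub_le (by positivity) _ s₀).trans
    (div_le_div_of_nonneg_right hres (by positivity))
  refine ⟨hcoer.isUnit (by positivity), ?_⟩
  calc ∑ i, (_ - s₀ i) ^ 2 = ‖toLp 2 (_ - s₀)‖ ^ 2 := (norm_toLp_sq _).symm
    _ ≤ (4 * W * R / lammin * ε) ^ 2 := by
      refine pow_le_pow_left₀ (norm_nonneg _) (herr.trans_eq ?_) 2
      rw [hWsum]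
      field_simp
      ring
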